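/- arXiv:2304.09963 — 4 statements merged into one kernel-verified Lean document; each statement's English description precedes it below -/
import Mathlib

section
/- Let k be a field, N ≥ 1 and r ≥ 0 integers. If Γ is a nonempty finite set of points of ℙ^N over k satisfying the Cayley–Bacharach condition CB(r), then |Γ| ≥ r + 2. -/
/-- A homogeneous polynomial `f` vanishes at a point `P` of projective space `ℙ^N` over `k`
(a one-dimensional subspace of `k^{N+1}`) if it vanishes at a (equivalently, for homogeneous
`f`, any) nonzero representative vector of `P`. -/
def VanishesAt {k : Type} [Field k] {N : ℕ}
    (f : MvPolynomial (Fin (N + 1)) k) (P : Projectivization k (Fin (N + 1) → k)) : Prop :=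
  MvPolynomial.eval P.rep f = 0

/-- A finite set `Γ ⊆ ℙ^N` satisfies the Cayley–Bacharach condition `CB(r)` if for every
`P ∈ Γ`, every homogeneous polynomial of degree `r` vanishing at all points of `Γ \ {P}`
also vanishes at `P`. -/
def CayleyBacharach {k : Type} [Field k] (N : ℕ) (r : ℕ)
    (Γ : Finset (Projectivization k (Fin (N + 1) → k))) : Prop :=
  ∀ P ∈ Γ, ∀ f : MvPolynomial (Fin (N + 1)) k, f.IsHomogeneous r →
    (∀ Q ∈ Γ, Q ≠ P → VanishesAt f Q) → VanishesAt f P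

/-!
If `|Γ| ≤ r + 1`, then for `P ∈ Γ` the other points are at most `r` in number. A product of
linear forms, one through each `Q ∈ Γ \ {P}` and none through `P`, padded by a power of a
coordinate that is nonzero at `P`, is a form of degree `r` vanishing on `Γ \ {P}` but not at `P`,
contradicting `CB(r)`.
-/

open MvPolynomial

open scoped LinearAlgebra.Projectivization

namespace Projectivization

variable {K V : Type*} [Field K] [AddCommGroup V] [Module K V]

theorem exists_linearMap_apply_rep_ne_zero_and_eq_zero {P Q : ℙ K V} (hPQ : P ≠ Q) :
    ∃ φ : V →ₗ[K] K, φ P.rep ≠ 0 ∧ φ Q.rep = 0 := by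
  have hP : P.rep ∉ K ∙ Q.rep := by
    intro hmem
    obtain ⟨a, ha⟩ := Submodule.mem_span_singleton.mp hmem
    apply hPQ
    rw [← P.mk_rep, ← Q.mk_rep, mk_eq_mk_iff']
    exact ⟨a, ha⟩
  obtain ⟨φ, hφP, hφQ⟩ := Submodule.exists_le_ker_of_notMem hP
  exact ⟨φ, hφP, hφQ (Submodule.mem_span_singleton_self _)⟩

end Projectivization

namespace MvPolynomial

variable {σ R : Type*} [Fintype σ] [DecidableEq σ] [CommSemiring R]

noncomputable def ofLinearMap (φ : (σ → R) →ₗ[R] R) : MvPolynomial σ R :=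
  ∑ i, C (φ fun j => if i = j then 1 else 0) * X i

@[simp]
theorem eval_ofLinearMap (φ : (σ → R) →ₗ[R] R) (v : σ → R) :
    eval v (ofLinearMap φ) = φ v := by
  simp [ofLinearMap, φ.pi_apply_eq_sum_univ v, mul_comm]

theorem isHomogeneous_ofLinearMap (φ : (σ → R) →ₗ[R] R) : (ofLinearMap φ).IsHomogeneous 1 :=
  IsHomogeneous.sum _ _ _ fun i _ => isHomogeneous_C_mul_X _ i

end MvPolynomial

section Separation

variable {k : Type} [Field k] {N : ℕ}

theorem exists_isHomogeneous_card_vanishesAt_not_vanishesAt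
    (S : Finset (ℙ k (Fin (N + 1) → k))) {P : ℙ k (Fin (N + 1) → k)}
    (hP : P ∉ S) :
    ∃ f : MvPolynomial (Fin (N + 1)) k, f.IsHomogeneous S.card ∧
      (∀ Q ∈ S, VanishesAt f Q) ∧ ¬VanishesAt f P := by
  classical
  induction S using Finset.induction_on with
  | empty => exact ⟨1, isHomogeneous_one _ _, by simp, by simp [VanishesAt]⟩
  | insert Q S hQS ih =>
    obtain ⟨f, hf, hfS, hfP⟩ := ih fun h => hP (Finset.mem_insert_of_mem h)
    obtain ⟨φ, hφP, hφQ⟩ :=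
      Projectivization.exists_linearMap_apply_rep_ne_zero_and_eq_zero fun h : P = Q =>
        hP (h ▸ Finset.mem_insert_self P S)
    refine ⟨f * ofLinearMap φ, ?_, ?_, ?_⟩
    · rw [Finset.card_insert_of_notMem hQS]
      exact hf.mul (isHomogeneous_ofLinearMap φ)
    · simp only [Finset.forall_mem_insert, VanishesAt, map_mul, eval_ofLinearMap]
      exact ⟨by rw [hφQ, mul_zero], fun R hR => by rw [hfS R hR, zero_mul]⟩
    · simp only [VanishesAt, map_mul, eval_ofLinearMap] at hfP ⊢
      exact mul_ne_zero hfP hφP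

theorem exists_isHomogeneous_vanishesAt_not_vanishesAt
    (S : Finset (ℙ k (Fin (N + 1) → k))) {P : ℙ k (Fin (N + 1) → k)}
    (hP : P ∉ S) {d : ℕ} (hd : S.card ≤ d) :
    ∃ f : MvPolynomial (Fin (N + 1)) k, f.IsHomogeneous d ∧
      (∀ Q ∈ S, VanishesAt f Q) ∧ ¬VanishesAt f P := by
  obtain ⟨f, hf, hfS, hfP⟩ := exists_isHomogeneous_card_vanishesAt_not_vanishesAt S hP
  obtain ⟨i, hi⟩ := Function.ne_iff.mp P.rep_nonzero
  refine ⟨f * X i ^ (d - S.card), ?_, ?_, ?_⟩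
  · simpa [Nat.add_sub_cancel' hd] using hf.mul (isHomogeneous_X_pow i (d - S.card))
  · intro Q hQ
    simp only [VanishesAt, map_mul] at hfS ⊢
    rw [hfS Q hQ, zero_mul]
  · simp only [VanishesAt, map_mul, map_pow, eval_X] at hfP ⊢
    exact mul_ne_zero hfP (pow_ne_zero _ hi)

end Separation

theorem stmt0_general (k : Type) [Field k] (N r : ℕ)
    (Γ : Finset (Projectivization k (Fin (N + 1) → k))) (hne : Γ.Nonempty)
    (hCB : CayleyBacharach N r Γ) :
    r + 2 ≤ Γ.card := by
  classical
  obtain ⟨P, hP⟩ := hne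
  by_contra! hcard
  have hrest : (Γ.erase P).card ≤ r := by
    rw [Finset.card_erase_of_mem hP]
    omega
  obtain ⟨f, hf, hfΓ, hfP⟩ :=
    exists_isHomogeneous_vanishesAt_not_vanishesAt (Γ.erase P) (Γ.notMem_erase P) hrest
  exact hfP (hCB P hP f hf fun Q hQ hQP => hfΓ Q (Finset.mem_erase.mpr ⟨hQP, hQ⟩))

/-- A nonempty finite set of points of `ℙ^N` satisfying `CB(r)` has at least `r + 2` points. -/
theorem stmt0 (k : Type) [Field k] (N r : ℕ) (hN : 1 ≤ N)
    (Γ : Finset (Projectivization k (Fin (N + 1) → k))) (hne : Γ.Nonempty)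
    (hCB : CayleyBacharach N r Γ) :
    r + 2 ≤ Γ.card :=
  stmt0_general k N r Γ hne hCB
end

section
/- Let k be a field, N ≥ 1, and let Γ be a finite set of points of ℙ^N over k satisfying the Cayley–Bacharach condition CB(r). Let g ∈ k[x_0,…,x_N] be a homogeneous polynomial of degree d with 0 ≤ d ≤ r, and let D ⊆ ℙ^N be the set of points at which g vanishes. Then the set Γ \ (Γ ∩ D) satisfies the Cayley–Bacharach condition CB(r − d). -/
/-! Multiplying a degree `r - d` form `f` by `g` gives a degree `r` form vanishing on
`Γ \ {P}`: `g` kills the points of `D`, `f` the others. By `CB(r)` it vanishes at `P`, where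
`g` does not. -/

theorem vanishesAt_mul_iff {k : Type} [Field k] {N : ℕ}
    {f g : MvPolynomial (Fin (N + 1)) k} {P : Projectivization k (Fin (N + 1) → k)} :
    VanishesAt (f * g) P ↔ VanishesAt f P ∨ VanishesAt g P := by
  simp only [VanishesAt, map_mul, mul_eq_zero]

theorem stmt1_general (k : Type) [Field k] (N r d : ℕ) (hdr : d ≤ r)
    (Γ : Finset (Projectivization k (Fin (N + 1) → k)))
    (hCB : CayleyBacharach N r Γ)
    (g : MvPolynomial (Fin (N + 1)) k) (hg : g.IsHomogeneous d)
    (Γ' : Finset (Projectivization k (Fin (N + 1) → k)))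
    (hΓ' : ∀ P, P ∈ Γ' ↔ P ∈ Γ ∧ ¬ VanishesAt g P) :
    CayleyBacharach N (r - d) Γ' := by
  intro P hP f hf hvan
  obtain ⟨hPΓ, hPg⟩ := (hΓ' P).mp hP
  have hfg : (f * g).IsHomogeneous r := Nat.sub_add_cancel hdr ▸ hf.mul hg
  have hvan_fg : ∀ Q ∈ Γ, Q ≠ P → VanishesAt (f * g) Q := fun Q hQ hQP =>
    vanishesAt_mul_iff.mpr <| or_iff_not_imp_right.mpr fun hQg =>
      hvan Q ((hΓ' Q).mpr ⟨hQ, hQg⟩) hQP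
  exact (vanishesAt_mul_iff.mp (hCB P hPΓ (f * g) hfg hvan_fg)).resolve_right hPg

/-- If `Γ ⊆ ℙ^N` satisfies `CB(r)`, `g` is homogeneous of degree `d ≤ r` with vanishing
locus `D`, then `Γ \ (Γ ∩ D)` (the points of `Γ` where `g` does not vanish) satisfies
`CB(r - d)`. -/
theorem stmt1 (k : Type) [Field k] (N r d : ℕ) (hN : 1 ≤ N) (hdr : d ≤ r)
    (Γ : Finset (Projectivization k (Fin (N + 1) → k)))
    (hCB : CayleyBacharach N r Γ)
    (g : MvPolynomial (Fin (N + 1)) k) (hg : g.IsHomogeneous d)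
    (Γ' : Finset (Projectivization k (Fin (N + 1) → k)))
    (hΓ' : ∀ P, P ∈ Γ' ↔ P ∈ Γ ∧ ¬ VanishesAt g P) :
    CayleyBacharach N (r - d) Γ' :=
  stmt1_general k N r d hdr Γ hCB g hg Γ' hΓ'
end

section
/- Let k be a field, N ≥ 1, and let Γ be a finite set of points of ℙ^N over k satisfying the Cayley–Bacharach condition CB(r). Let Γ' ⊆ Γ be a subset, and suppose there exists a homogeneous polynomial g ∈ k[x_0,…,x_N] of degree m with 0 ≤ m ≤ r such that g vanishes at every point of Γ \ Γ' and g vanishes at no point of Γ'. Then Γ' satisfies the Cayley–Bacharach condition CB(r − m); in particular, if Γ' is nonempty then |Γ'| ≥ r − m + 2. -/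
/-!
If `f` has degree `r - m` and vanishes on `Γ' \ {P}`, then `f * g` has degree `r` and vanishes
on `Γ \ {P}`, so `CB(r)` makes it vanish at `P`; since `g` does not, `f` does. For the bound, a
set with at most `s + 1` points cannot satisfy `CB(s)`: a product of linear forms, one through
each point other than `P` and missing `P`, padded by a power of a coordinate nonzero at `P`,
separates `P` in degree `s`.
-/

open MvPolynomial

section

variable {k : Type*} [Field k]

lemma Projectivization.rep_notMem_span_rep {V : Type*} [AddCommGroup V] [Module k V]
    {P Q : Projectivization k V} (h : Q ≠ P) : P.rep ∉ k ∙ Q.rep := by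
  rw [Submodule.mem_span_singleton]
  rintro ⟨a, ha⟩
  have ha0 : a ≠ 0 := by rintro rfl; exact P.rep_nonzero (by rw [← ha, zero_smul])
  apply h
  rw [← Q.mk_rep, ← P.mk_rep, Projectivization.mk_eq_mk_iff']
  exact ⟨a⁻¹, by rw [← ha, smul_smul, inv_mul_cancel₀ ha0, one_smul]⟩

variable {σ : Type*} [Fintype σ]

lemma exists_isHomogeneous_one_eval_eq_zero_ne_zero {P Q : Projectivization k (σ → k)}
    (h : Q ≠ P) :
    ∃ f : MvPolynomial σ k, f.IsHomogeneous 1 ∧ eval Q.rep f = 0 ∧ eval P.rep f ≠ 0 := by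
  obtain ⟨φ, hφP, hφQ⟩ := Submodule.exists_dual_map_eq_bot_of_notMem
    (Projectivization.rep_notMem_span_rep h) inferInstance
  set b := Pi.basisFun k σ
  have eval_eq (v : σ → k) : eval v (∑ i, C (φ (b i)) * X i) = φ v := by
    conv_rhs => rw [← b.sum_repr v, map_sum]
    simp only [map_sum, map_mul, eval_C, eval_X, map_smul, smul_eq_mul, b, Pi.basisFun_repr,
      mul_comm]
  have hφQ' : φ Q.rep = 0 :=
    (Submodule.mem_bot k).mp (hφQ ▸ Submodule.mem_map_of_mem (Submodule.mem_span_singleton_self _))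
  exact ⟨∑ i, C (φ (b i)) * X i, IsHomogeneous.sum _ _ _ fun i _ => isHomogeneous_C_mul_X _ i,
    by rwa [eval_eq], by rwa [eval_eq]⟩

lemma exists_isHomogeneous_eval_eq_zero_of_mem_ne_zero (S : Finset (Projectivization k (σ → k)))
    {P : Projectivization k (σ → k)} (hP : P ∉ S) {d : ℕ} (hd : S.card ≤ d) :
    ∃ f : MvPolynomial σ k, f.IsHomogeneous d ∧ (∀ Q ∈ S, eval Q.rep f = 0) ∧
      eval P.rep f ≠ 0 := by
  classical
  obtain ⟨i, hi⟩ : ∃ i, P.rep i ≠ 0 := Function.ne_iff.mp P.rep_nonzero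
  suffices ∃ f : MvPolynomial σ k, f.IsHomogeneous S.card ∧ (∀ Q ∈ S, eval Q.rep f = 0) ∧
      eval P.rep f ≠ 0 by
    obtain ⟨f, hf, hfS, hfP⟩ := this
    refine ⟨f * X i ^ (d - S.card), ?_, fun Q hQ => by simp [hfS Q hQ], by simp [hfP, hi]⟩
    simpa [Nat.add_sub_cancel' hd] using hf.mul (isHomogeneous_X_pow i (d - S.card))
  clear hd
  induction S using Finset.induction_on with
  | empty => exact ⟨1, isHomogeneous_one σ k, by simp, by simp⟩
  | insert Q S hQS ih =>
    obtain ⟨f, hf, hfS, hfP⟩ := ih (fun h => hP (Finset.mem_insert_of_mem h))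
    have hQP : Q ≠ P := by rintro rfl; exact hP (Finset.mem_insert_self Q S)
    obtain ⟨ℓ, hℓ, hℓQ, hℓP⟩ := exists_isHomogeneous_one_eval_eq_zero_ne_zero hQP
    refine ⟨f * ℓ, by simpa [Finset.card_insert_of_notMem hQS] using hf.mul hℓ, ?_,
      by simp [hfP, hℓP]⟩
    rintro R hR
    rcases Finset.mem_insert.mp hR with rfl | hR
    · simp [hℓQ]
    · simp [hfS R hR]

end

namespace CayleyBacharach

variable {k : Type} [Field k] {N r : ℕ} {Γ : Finset (Projectivization k (Fin (N + 1) → k))}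

theorem of_isHomogeneous_mul {m : ℕ} (hmr : m ≤ r) (hCB : CayleyBacharach N r Γ)
    {Γ' : Finset (Projectivization k (Fin (N + 1) → k))} (hsub : Γ' ⊆ Γ)
    {g : MvPolynomial (Fin (N + 1)) k} (hg : g.IsHomogeneous m)
    (hvan : ∀ P ∈ Γ, P ∉ Γ' → VanishesAt g P) (hnonvan : ∀ P ∈ Γ', ¬ VanishesAt g P) :
    CayleyBacharach N (r - m) Γ' := by
  intro P hP f hf hfvan
  have hfg : VanishesAt (f * g) P := by
    refine hCB P (hsub hP) (f * g) (by simpa [Nat.sub_add_cancel hmr] using hf.mul hg) ?_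
    intro Q hQ hQP
    simp only [VanishesAt, map_mul, mul_eq_zero]
    by_cases hQ' : Q ∈ Γ'
    exacts [Or.inl (hfvan Q hQ' hQP), Or.inr (hvan Q hQ hQ')]
  have hgP := hnonvan P hP
  simp only [VanishesAt, map_mul, mul_eq_zero] at hfg hgP
  exact hfg.resolve_right hgP

theorem add_two_le_card (hCB : CayleyBacharach N r Γ) (hΓ : Γ.Nonempty) : r + 2 ≤ Γ.card := by
  classical
  obtain ⟨P, hP⟩ := hΓ
  by_contra! hcard
  obtain ⟨f, hf, hfvan, hfP⟩ := exists_isHomogeneous_eval_eq_zero_of_mem_ne_zero (Γ.erase P)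
    (Γ.notMem_erase P) (d := r) (by rw [Finset.card_erase_of_mem hP]; omega)
  exact hfP (hCB P hP f hf fun Q hQ hQP => hfvan Q (Finset.mem_erase.mpr ⟨hQP, hQ⟩))

end CayleyBacharach

theorem stmt2_general (k : Type) [Field k] (N r m : ℕ) (hmr : m ≤ r)
    (Γ Γ' : Finset (Projectivization k (Fin (N + 1) → k)))
    (hsub : Γ' ⊆ Γ)
    (hCB : CayleyBacharach N r Γ)
    (g : MvPolynomial (Fin (N + 1)) k) (hg : g.IsHomogeneous m)
    (hvan : ∀ P ∈ Γ, P ∉ Γ' → VanishesAt g P)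
    (hnonvan : ∀ P ∈ Γ', ¬ VanishesAt g P) :
    CayleyBacharach N (r - m) Γ' ∧ (Γ'.Nonempty → r - m + 2 ≤ Γ'.card) := by
  have hCB' := hCB.of_isHomogeneous_mul hmr hsub hg hvan hnonvan
  exact ⟨hCB', hCB'.add_two_le_card⟩

/-- If `Γ ⊆ ℙ^N` satisfies `CB(r)`, `Γ' ⊆ Γ`, and there is a homogeneous polynomial `g` of
degree `m ≤ r` vanishing at every point of `Γ \ Γ'` and at no point of `Γ'`, then `Γ'`
satisfies `CB(r - m)`; in particular, if `Γ'` is nonempty then `|Γ'| ≥ r - m + 2`. -/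
theorem stmt2 (k : Type) [Field k] (N r m : ℕ) (hN : 1 ≤ N) (hmr : m ≤ r)
    (Γ Γ' : Finset (Projectivization k (Fin (N + 1) → k)))
    (hsub : Γ' ⊆ Γ)
    (hCB : CayleyBacharach N r Γ)
    (g : MvPolynomial (Fin (N + 1)) k) (hg : g.IsHomogeneous m)
    (hvan : ∀ P ∈ Γ, P ∉ Γ' → VanishesAt g P)
    (hnonvan : ∀ P ∈ Γ', ¬ VanishesAt g P) :
    CayleyBacharach N (r - m) Γ' ∧ (Γ'.Nonempty → r - m + 2 ≤ Γ'.card) :=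
  stmt2_general k N r m hmr Γ Γ' hsub hCB g hg hvan hnonvan
end

section
/- Let n ≥ 1 and let S be a nonempty set of nonzero vectors of ℤⁿ, regarded as vectors in ℝⁿ. Let D denote the topological interior of the dual cone {β ∈ ℝⁿ : ⟨β, s⟩ ≥ 0 for all s ∈ S}, where ⟨·,·⟩ is the standard inner product. Then for every α ∈ D the infimum m(α) := inf_{s ∈ S} ⟨α, s⟩ is attained by some s ∈ S, and the resulting function m : D → ℝ is continuous. -/
/-!
If a closed ball of radius `r` around `α` lies in the dual cone of `S`, then testing the cone
condition at `α ± r eᵢ` gives `r |sᵢ| ≤ ⟨α, s⟩` for every `s ∈ S`. Hence `s ↦ ⟨α, s⟩` is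
coercive on the lattice points of `S`, so it attains its infimum. The minimum function is then
a pointwise minimum of linear functions, hence concave on the convex open interior of the
dual cone, and concave functions on open subsets of `ℝⁿ` are continuous.
-/

open Filter Matrix Metric Set

lemma exists_forall_le_of_mul_norm_le {E : Type*} [NormedAddCommGroup E] [ProperSpace E]
    [DiscreteTopology E] {S : Set E} (hS : S.Nonempty) {f : E → ℝ} {ε : ℝ} (hε : 0 < ε)
    (hf : ∀ s ∈ S, ε * ‖s‖ ≤ f s) : ∃ s₀ ∈ S, ∀ s ∈ S, f s₀ ≤ f s := by
  have : Nonempty S := hS.to_subtype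
  have hnorm : Tendsto (fun s : S => ‖(s : E)‖) cofinite atTop :=
    tendsto_norm_comp_cofinite_atTop_of_isClosedEmbedding
      (isClosed_discrete S).isClosedEmbedding_subtypeVal
  have hcoercive : Tendsto (fun s : S => f s) cofinite atTop :=
    tendsto_atTop_mono (fun s => hf s s.2) (hnorm.const_mul_atTop hε)
  obtain ⟨⟨s₀, hs₀⟩, hmin⟩ := hcoercive.exists_forall_le
  exact ⟨s₀, hs₀, fun s hs => hmin ⟨s, hs⟩⟩

lemma concaveOn_of_isLeast {E σ : Type*} [AddCommGroup E] [Module ℝ E] {U : Set E}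
    (hU : Convex ℝ U) {S : Set σ} {f : σ → E → ℝ} (hf : ∀ s ∈ S, ConcaveOn ℝ U (f s))
    {m : E → ℝ} (hm : ∀ x ∈ U, IsLeast {y | ∃ s ∈ S, y = f s x} (m x)) :
    ConcaveOn ℝ U m := by
  refine ⟨hU, fun x hx y hy a b ha hb hab => ?_⟩
  obtain ⟨s, hs, hms⟩ := (hm _ (hU hx hy ha hb hab)).1
  have hmx : m x ≤ f s x := (hm x hx).2 ⟨s, hs, rfl⟩
  have hmy : m y ≤ f s y := (hm y hy).2 ⟨s, hs, rfl⟩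
  calc a • m x + b • m y ≤ a • f s x + b • f s y := by gcongr
    _ ≤ f s (a • x + b • y) := (hf s hs).2 hx hy ha hb hab
    _ = m (a • x + b • y) := hms.symm

section DualCone

variable {ι : Type*} [Fintype ι]

lemma isLinearMap_dotProduct_left (v : ι → ℝ) : IsLinearMap ℝ (fun β : ι → ℝ => β ⬝ᵥ v) :=
  ⟨fun β γ => add_dotProduct β γ v, fun c β => smul_dotProduct c β v⟩

lemma convex_dualCone {σ : Type*} (S : Set σ) (v : σ → ι → ℝ) :
    Convex ℝ {β : ι → ℝ | ∀ s ∈ S, 0 ≤ β ⬝ᵥ v s} := by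
  simp only [ofPred_forall]
  exact convex_iInter₂ fun s _ => convex_halfSpace_ge (isLinearMap_dotProduct_left (v s)) 0

lemma mul_abs_le_dotProduct_of_closedBall {α v : ι → ℝ} {r : ℝ} (hr : 0 ≤ r)
    (h : ∀ β ∈ closedBall α r, 0 ≤ β ⬝ᵥ v) (i : ι) : r * |v i| ≤ α ⬝ᵥ v := by
  classical
  have hshift : ∀ c, |c| ≤ r → 0 ≤ α ⬝ᵥ v + c * v i := fun c hc => by
    have hmem : α + Pi.single i c ∈ closedBall α r := by
      rwa [mem_closedBall, dist_self_add_left, Pi.norm_single, Real.norm_eq_abs]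
    simpa only [add_dotProduct, single_dotProduct] using h _ hmem
  have hplus := hshift r (abs_of_nonneg hr).le
  have hminus := hshift (-r) (by rw [abs_neg, abs_of_nonneg hr])
  rw [← abs_of_nonneg hr, ← abs_mul]
  exact abs_le.2 ⟨by linarith, by linarith⟩

lemma exists_forall_dotProduct_le_of_mem_interior {S : Set (ι → ℤ)} (hS : S.Nonempty)
    {α : ι → ℝ} (hα : α ∈ interior {β : ι → ℝ | ∀ s ∈ S, 0 ≤ β ⬝ᵥ (Int.cast ∘ s)}) :
    ∃ s₀ ∈ S, ∀ s ∈ S, α ⬝ᵥ (Int.cast ∘ s₀) ≤ α ⬝ᵥ (Int.cast ∘ s) := by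
  obtain ⟨r, hr, hball⟩ := nhds_basis_closedBall.mem_iff.1 (mem_interior_iff_mem_nhds.1 hα)
  refine exists_forall_le_of_mul_norm_le hS hr fun s hs => ?_
  have hcone : ∀ β ∈ closedBall α r, 0 ≤ β ⬝ᵥ (Int.cast ∘ s) := fun β hβ => hball hβ s hs
  rw [← le_div_iff₀' hr, pi_norm_le_iff_of_nonneg
    (div_nonneg (hcone α (mem_closedBall_self hr.le)) hr.le)]
  intro i
  rw [le_div_iff₀' hr, Int.norm_eq_abs]
  exact mul_abs_le_dotProduct_of_closedBall hr.le hcone i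

end DualCone

theorem stmt8_general (n : ℕ) (S : Set (Fin n → ℤ)) (hS : S.Nonempty) :
    ∃ m : (Fin n → ℝ) → ℝ,
      (∀ α ∈ interior {β : Fin n → ℝ | ∀ s ∈ S, 0 ≤ ∑ i, β i * (s i : ℝ)},
        IsLeast {x : ℝ | ∃ s ∈ S, x = ∑ i, α i * (s i : ℝ)} (m α)) ∧
      ContinuousOn m (interior {β : Fin n → ℝ | ∀ s ∈ S, 0 ≤ ∑ i, β i * (s i : ℝ)}) := by
  set D := interior {β : Fin n → ℝ | ∀ s ∈ S, 0 ≤ ∑ i, β i * (s i : ℝ)}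
  have hD : Convex ℝ D := (convex_dualCone S fun s => Int.cast ∘ s).interior
  have hleast : ∀ α ∈ D, IsLeast {x : ℝ | ∃ s ∈ S, x = ∑ i, α i * (s i : ℝ)}
      (sInf {x : ℝ | ∃ s ∈ S, x = ∑ i, α i * (s i : ℝ)}) := fun α hα => by
    obtain ⟨s₀, hs₀, hmin⟩ := exists_forall_dotProduct_le_of_mem_interior hS hα
    have hs₀_least : IsLeast {x : ℝ | ∃ s ∈ S, x = ∑ i, α i * (s i : ℝ)}
        (α ⬝ᵥ (Int.cast ∘ s₀)) := ⟨⟨s₀, hs₀, rfl⟩, by rintro _ ⟨s, hs, rfl⟩; exact hmin s hs⟩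
    rwa [hs₀_least.csInf_eq]
  have hlinear : ∀ s ∈ S, ConcaveOn ℝ D fun α => α ⬝ᵥ (Int.cast ∘ s) :=
    fun s _ => (isLinearMap_dotProduct_left _).mk'.concaveOn hD
  exact ⟨_, hleast, (concaveOn_of_isLeast hD hlinear hleast).continuousOn isOpen_interior⟩

/-- Let `S` be a nonempty set of nonzero integer vectors in `ℤⁿ`, viewed inside `ℝⁿ`, and
let `D` be the interior of the dual cone `{β : ⟨β, s⟩ ≥ 0 for all s ∈ S}` for the standard
inner product. Then for each `α ∈ D` the infimum of `⟨α, s⟩` over `s ∈ S` is attained, and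
the resulting minimum function is continuous on `D`. -/
theorem stmt8 (n : ℕ) (hn : 1 ≤ n) (S : Set (Fin n → ℤ)) (hS : S.Nonempty)
    (hS0 : ∀ s ∈ S, s ≠ 0) :
    ∃ m : (Fin n → ℝ) → ℝ,
      (∀ α ∈ interior {β : Fin n → ℝ | ∀ s ∈ S, 0 ≤ ∑ i, β i * (s i : ℝ)},
        IsLeast {x : ℝ | ∃ s ∈ S, x = ∑ i, α i * (s i : ℝ)} (m α)) ∧
      ContinuousOn m (interior {β : Fin n → ℝ | ∀ s ∈ S, 0 ≤ ∑ i, β i * (s i : ℝ)}) :=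
  stmt8_general n S hS
end
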